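/- Let λ = (a_1^{b_1},…,a_r^{b_r}) with a_1 > … > a_r > 0, b_i > 0, and define λ^0 = (a_1^{b_1−1},(a_2−1)^{b_2},…,(a_{r−1}−1)^{b_{r−1}},(a_r−1)^{b_r+1}). Then (λ^0)^T = (λ^T)^0, i.e., the operation λ ↦ λ^0 commutes with conjugation of partitions. -/

import Mathlib

/-!
Encode a partition by its row function `g` and let `h` be the row function of its conjugate,
so that `j < g i ↔ i < h j`. Read row by row, `λ⁰` is given by `lamZeroP g`, and its cell
`(i, j)` is present iff `(i + 1, j + 1)` is a cell of `λ`, or row `i + 1` is as long as row `0`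
and contains `(i + 1, j)`, or column `j + 1` is as tall as column `0` and contains `(i, j + 1)`.
This description is symmetric under transposition, hence `(λ⁰)ᵀ = (λᵀ)⁰`.
-/

/-- The partition `(a_1^{b_1}, …, a_r^{b_r})` given by lists of part sizes `a`
and multiplicities `b`, as a function (0-indexed; zero beyond the last part). -/
def rectsP (a b : List ℕ) : ℕ → ℕ :=
  fun i => ((a.zip b).flatMap fun p => List.replicate p.2 p.1).getD i 0

/-- The conjugate (transpose) partition of `f`: `(conjP f) j = #{i : f i > j}`. -/
noncomputable def conjP (f : ℕ → ℕ) : ℕ → ℕ := fun j => Set.ncard {i : ℕ | j < f i}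

/-- `λ^0 = (a_1^{b_1−1}, (a_2−1)^{b_2}, …, (a_{r−1}−1)^{b_{r−1}}, (a_r−1)^{b_r+1})`. -/
def lamZero (a b : List ℕ) : ℕ → ℕ :=
  rectsP (a.headI :: (a.tail.map fun x => x - 1))
    ((b.set 0 (b.headI - 1)).set (b.length - 1) (b.getD (b.length - 1) 0 + 1))

@[simp]
lemma rectsP_nil_left (b : List ℕ) (i : ℕ) : rectsP [] b i = 0 := by
  simp [rectsP]

@[simp]
lemma rectsP_nil_right (a : List ℕ) (i : ℕ) : rectsP a [] i = 0 := by
  simp [rectsP]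

lemma rectsP_cons (x m : ℕ) (a b : List ℕ) (i : ℕ) :
    rectsP (x :: a) (m :: b) i = if i < m then x else rectsP a b (i - m) := by
  unfold rectsP
  rw [List.zip_cons_cons, List.flatMap_cons]
  split_ifs with h
  · rw [List.getD_append _ _ _ i (by simpa using h),
      List.getD_eq_getElem _ _ (by simpa using h), List.getElem_replicate]
  · rw [List.getD_append_right _ _ _ _ (by simpa using Nat.le_of_not_lt h)]
    simp

lemma exists_rectsP_eq_zero (a b : List ℕ) : ∃ N, rectsP a b N = 0 :=
  ⟨_, List.getD_eq_default _ _ le_rfl⟩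

lemma rectsP_eq_zero_or_mem (a b : List ℕ) (i : ℕ) : rectsP a b i = 0 ∨ rectsP a b i ∈ a := by
  induction a generalizing b i with
  | nil => simp
  | cons x a ih =>
    cases b with
    | nil => simp
    | cons m b =>
      rw [rectsP_cons]
      split_ifs
      · simp
      · exact (ih b _).imp_right (List.mem_cons_of_mem x)

lemma rectsP_lt_head {x : ℕ} {a : List ℕ} (b : List ℕ) (ha : (x :: a).IsChain (· > ·))
    (hx : 0 < x) (k : ℕ) : rectsP a b k < x :=
  (rectsP_eq_zero_or_mem a b k).elim (fun h => h ▸ hx) fun h => ha.rel_cons h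

lemma rectsP_antitone {a : List ℕ} (b : List ℕ) (ha : a.IsChain (· > ·)) :
    Antitone (rectsP a b) := by
  induction a generalizing b with
  | nil => simp [Antitone]
  | cons x a ih =>
    cases b with
    | nil => simp [Antitone]
    | cons m b =>
      have hx : ∀ k, rectsP a b k ≤ x := fun k =>
        (rectsP_eq_zero_or_mem a b k).elim (fun h => h ▸ Nat.zero_le x)
          fun h => (ha.rel_cons h).le
      intro i j hij
      simp only [rectsP_cons]
      split_ifs <;> first | omega | exact hx _ | exact ih b ha.tail (by omega)

lemma rectsP_pos {a b : List ℕ} (ha : ∀ x ∈ a, 0 < x) (hb : ∀ x ∈ b, 0 < x)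
    (hne : a ≠ []) (hlen : a.length = b.length) : 0 < rectsP a b 0 := by
  obtain ⟨x, a, rfl⟩ := List.exists_cons_of_ne_nil hne
  obtain ⟨m, b, rfl⟩ := List.exists_cons_of_length_eq_add_one hlen.symm
  rw [rectsP_cons, if_pos (hb m List.mem_cons_self)]
  exact ha x List.mem_cons_self

lemma rectsP_set_last_succ {a b : List ℕ} (ha : ∀ x ∈ a, 0 < x) (hb : ∀ x ∈ b, 0 < x)
    (hne : a ≠ []) (hlen : a.length = b.length) (j : ℕ) :
    rectsP a (b.set (b.length - 1) (b.getD (b.length - 1) 0 + 1)) j =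
      if rectsP a b j = 0 then rectsP a b (j - 1) else rectsP a b j := by
  induction a generalizing b j with
  | nil => exact absurd rfl hne
  | cons x a ih =>
    obtain ⟨m, b, rfl⟩ := List.exists_cons_of_length_eq_add_one hlen.symm
    obtain ⟨hx, ha⟩ := List.forall_mem_cons.mp ha
    obtain ⟨hm, hb⟩ := List.forall_mem_cons.mp hb
    rcases eq_or_ne a [] with rfl | ha'
    · obtain rfl : b = [] := List.length_eq_zero_iff.mp (by simpa using hlen.symm)
      simp only [rectsP_cons, rectsP_nil_left, List.length_singleton, Nat.sub_self,
        List.set_cons_zero, List.getD_cons_zero]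
      split_ifs <;> omega
    · have hlen' : a.length = b.length := by simpa using hlen
      have hb' : b ≠ [] := List.ne_nil_of_length_pos (hlen' ▸ List.length_pos_of_ne_nil ha')
      have hpos := rectsP_pos ha hb ha' hlen'
      have hlast : (m :: b).length - 1 = (b.length - 1) + 1 := by
        simp [Nat.sub_add_cancel (List.length_pos_of_ne_nil hb')]
      rw [hlast, List.set_cons_succ, List.getD_cons_succ, rectsP_cons, ih ha hb ha' hlen']
      simp only [rectsP_cons]
      split_ifs <;> try first | rfl | omega | (congr 1; omega)
      -- only `j = m` is left, where `rectsP a b 0 = 0` contradicts `hpos`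
      obtain rfl : j = m := by omega
      rw [Nat.sub_self] at *
      omega

lemma rectsP_map (f : ℕ → ℕ) (hf : f 0 = 0) (a b : List ℕ) (i : ℕ) :
    rectsP (a.map f) b i = f (rectsP a b i) := by
  induction a generalizing b i with
  | nil => simp [hf]
  | cons x a ih =>
    cases b with
    | nil => simp [hf]
    | cons m b =>
      simp only [List.map_cons, rectsP_cons, ih]
      split_ifs <;> rfl

lemma conjP_eq_of_forall_lt_iff {f : ℕ → ℕ} {j m : ℕ} (h : ∀ i, j < f i ↔ i < m) :
    conjP f j = m := by
  have hset : {i : ℕ | j < f i} = Set.Iio m := Set.ext h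
  rw [conjP, hset, Set.ncard_Iio_nat]

lemma lt_conjP_iff {g : ℕ → ℕ} (hg : Antitone g) {N : ℕ} (hN : g N = 0) (x y : ℕ) :
    x < conjP g y ↔ y < g x := by
  have hex : ∃ k, g k ≤ y := ⟨N, hN ▸ Nat.zero_le y⟩
  have key : ∀ i, y < g i ↔ i < Nat.find hex := fun i => by
    rw [Nat.lt_find_iff]
    exact ⟨fun hi k hk => not_le.mpr (hi.trans_le (hg hk)), fun hi => not_le.mp (hi i le_rfl)⟩
  rw [conjP_eq_of_forall_lt_iff key, key]

/-- `λ⁰` read off the rows of `λ`: row `i` of `λ⁰` is row `i + 1` of `λ` shortened by one,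
except that rows of the first rectangle keep their length, and where row `i + 1` is empty it is
row `i` shortened by one (this produces the extra part `a_r - 1`). -/
def lamZeroP (g : ℕ → ℕ) (i : ℕ) : ℕ :=
  if g (i + 1) = g 0 then g 0 else if g (i + 1) = 0 then g i - 1 else g (i + 1) - 1

lemma lt_lamZeroP_iff {g h : ℕ → ℕ} (hgh : ∀ i j, j < g i ↔ i < h j) (i j : ℕ) :
    j < lamZeroP g i ↔ j + 1 < g (i + 1) ∨ (g (i + 1) = g 0 ∧ j < g (i + 1)) ∨
      (h (j + 1) = h 0 ∧ i < h (j + 1)) := by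
  have := hgh i (j + 1); have := hgh i 0; have := hgh (i + 1) 0; have := hgh (i + 1) (j + 1)
  have := hgh 0 (j + 1)
  unfold lamZeroP
  split_ifs <;> omega

lemma lamZeroP_dual {g h : ℕ → ℕ} (hgh : ∀ i j, j < g i ↔ i < h j) (i j : ℕ) :
    j < lamZeroP g i ↔ i < lamZeroP h j := by
  rw [lt_lamZeroP_iff hgh, lt_lamZeroP_iff (fun i j => (hgh j i).symm), hgh (i + 1) (j + 1)]
  tauto

lemma lamZero_eq_lamZeroP {a b : List ℕ} (hch : a.IsChain (· > ·)) (ha : ∀ x ∈ a, 0 < x)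
    (hb : ∀ x ∈ b, 0 < x) (hlen : a.length = b.length) (h2 : 2 ≤ a.length) :
    lamZero a b = lamZeroP (rectsP a b) := by
  obtain ⟨x, a, rfl⟩ := List.exists_cons_of_ne_nil (List.ne_nil_of_length_pos (l := a) (by omega))
  obtain ⟨m, b, rfl⟩ := List.exists_cons_of_length_eq_add_one hlen.symm
  obtain ⟨hx, ha⟩ := List.forall_mem_cons.mp ha
  obtain ⟨hm, hb⟩ := List.forall_mem_cons.mp hb
  have hlen' : a.length = b.length := by simpa using hlen
  have ha' : a ≠ [] := List.ne_nil_of_length_pos (by simp at h2; omega)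
  have hb' : b ≠ [] := List.ne_nil_of_length_pos (hlen' ▸ List.length_pos_of_ne_nil ha')
  have hlast : (m :: b).length - 1 = (b.length - 1) + 1 := by
    simp [Nat.sub_add_cancel (List.length_pos_of_ne_nil hb')]
  have hlam : lamZero (x :: a) (m :: b) = rectsP (x :: a.map (· - 1))
      ((m - 1) :: b.set (b.length - 1) (b.getD (b.length - 1) 0 + 1)) := by
    simp only [lamZero, List.headI_cons, List.tail_cons, List.set_cons_zero, hlast,
      List.set_cons_succ, List.getD_cons_succ]
  have hpos : ∀ k, rectsP a b k = 0 → 0 < k := fun k hk =>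
    Nat.pos_of_ne_zero fun h0 => (rectsP_pos ha hb ha' hlen').ne' (h0 ▸ hk)
  have hlt := rectsP_lt_head b hch hx
  funext i
  rw [hlam, rectsP_cons, rectsP_map _ rfl, rectsP_set_last_succ ha hb ha' hlen']
  unfold lamZeroP
  simp only [rectsP_cons, if_pos hm]
  rcases lt_or_ge (i + 1) m with hi | hi
  · simp [hi, show i < m - 1 by omega]
  have hk : i - (m - 1) = i + 1 - m := by omega
  have hk' : i - m = i + 1 - m - 1 := by omega
  rw [hk, hk']
  have := hpos (i + 1 - m); have := hlt (i + 1 - m); have := hlt (i + 1 - m - 1)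
  split_ifs <;> omega

/-- the operation `λ ↦ λ^0` commutes with conjugation: if
`λ = (a_1^{b_1},…,a_r^{b_r})` is canonical with `r ≥ 2` and
`λ^T = (a'_1^{b'_1},…,a'_r^{b'_r})` is the canonical decomposition of the
conjugate, then `(λ^0)^T = (λ^T)^0`. -/
theorem conj_lamZero (r : ℕ) (a b a' b' : List ℕ) (hr : 2 ≤ r)
    (ha : a.length = r) (hb : b.length = r) (ha' : a'.length = r) (hb' : b'.length = r)
    (hch : a.Chain' (· > ·)) (hch' : a'.Chain' (· > ·))
    (hap : ∀ x ∈ a, 0 < x) (hbp : ∀ x ∈ b, 0 < x)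
    (hap' : ∀ x ∈ a', 0 < x) (hbp' : ∀ x ∈ b', 0 < x)
    (hconj : conjP (rectsP a b) = rectsP a' b') :
    conjP (lamZero a b) = lamZero a' b' := by
  obtain ⟨N, hN⟩ := exists_rectsP_eq_zero a b
  have hdual : ∀ i j, j < rectsP a b i ↔ i < rectsP a' b' j := fun i j => by
    rw [← hconj, lt_conjP_iff (rectsP_antitone b hch) hN]
  rw [lamZero_eq_lamZeroP hch hap hbp (by omega) (by omega),
    lamZero_eq_lamZeroP hch' hap' hbp' (by omega) (by omega)]
  exact funext fun j => conjP_eq_of_forall_lt_iff fun i => lamZeroP_dual hdual i j
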